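/- arXiv:2401.04946 — 2 statements merged into one kernel-verified Lean document; each statement's English description precedes it below -/
import Mathlib

section
/- Suppose ‖u''(t)‖ ≤ C t^{σ−2} for t > 0 with σ > 0. Then on the graded mesh t_n = (nτ)^γ with γ ≥ 1, for every n ≥ 1 the linear interpolation error satisfies ‖u − u_I‖_{L^∞(I_n)} ≤ C' · τ^{min(γσ, 2)} · t_n^{max(0, σ − 2/γ)} for a constant C' independent of n and τ. -/
/-!
Write `I f` for the chord of `f` over `[a, b]` (`lineInterp`). If `‖f''‖ ≤ g''` on `(a, b)` and `ℓ`
is a norming functional of `f t - I f t`, then `g + ℓ ∘ f` is convex, so it lies below its chord;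
this gives `‖f t - I f t‖ ≤ I g t - g t`. On a cell `[t_{n-1}, t_n]` with `n ≥ 2` we take
`g = M s² / 2`, where `M ≤ 4^γ C t_n^{σ-2}` because `t_n ≤ 2^γ t_{n-1}`; with
`τ_n ≤ γ τ t_n^{1-1/γ}` this bounds the error by a multiple of `τ² t_n^{σ-2/γ}`. On the first cell,
where `u''` may blow up, we compare instead with the convex function `-K s^p` for some
`0 < p < 1` with `p ≤ σ`, which gives a multiple of `t_1^σ = τ² t_1^{σ-2/γ}`. Finally
`τ² t_n^{σ-2/γ} ≤ τ^{min(γσ,2)} t_n^{max(0,σ-2/γ)}` because `t_n ≥ τ^γ`.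
-/

open Set

theorem rpow_sub_rpow_le_mul {c d γ : ℝ} (hd : 0 ≤ d) (hdc : d ≤ c) (hγ : 1 ≤ γ) :
    c ^ γ - d ^ γ ≤ γ * c ^ (γ - 1) * (c - d) := by
  rcases hdc.eq_or_lt with rfl | hdc
  · simp
  have hslope := (convexOn_rpow hγ).slope_le_of_hasDerivAt hd (hd.trans hdc.le) hdc
    (Real.hasDerivAt_rpow_const (Or.inr hγ))
  rwa [slope_def_field, div_le_iff₀ (sub_pos.2 hdc)] at hslope

theorem rpow_le_sq_mul_rpow {a s b k q : ℝ} (ha : 0 < a) (hs : s ∈ Icc a b) (hb : b ≤ k * a)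
    (hk : 1 ≤ k) (hq : -2 ≤ q) : s ^ q ≤ k ^ 2 * b ^ q := by
  have hs0 : 0 < s := ha.trans_le hs.1
  have hb0 : 0 < b := hs0.trans_le hs.2
  have hk0 : 0 < k := one_pos.trans_le hk
  rcases le_total 0 q with hq0 | hq0
  · calc s ^ q ≤ b ^ q := Real.rpow_le_rpow hs0.le hs.2 hq0
      _ ≤ k ^ 2 * b ^ q := le_mul_of_one_le_left (Real.rpow_nonneg hb0.le q) (one_le_pow₀ hk)
  · have hab : b / k ≤ a := by rw [div_le_iff₀ hk0]; linarith
    calc s ^ q ≤ (b / k) ^ q :=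
          Real.rpow_le_rpow_of_nonpos (by positivity) (hab.trans hs.1) hq0
      _ = k ^ (-q) * b ^ q := by
          rw [Real.div_rpow hb0.le hk0.le, Real.rpow_neg hk0.le]; ring
      _ ≤ k ^ 2 * b ^ q := by
          gcongr
          calc k ^ (-q) ≤ k ^ (2 : ℝ) := Real.rpow_le_rpow_of_exponent_le hk (by linarith)
            _ = k ^ 2 := Real.rpow_two k

theorem sq_mul_rpow_le_rpow_min_mul_rpow_max {τ c γ σ : ℝ} (hτ : 0 < τ) (hτc : τ ≤ c)
    (hγ : 0 < γ) :
    τ ^ 2 * c ^ (γ * σ - 2) ≤ τ ^ min (γ * σ) 2 * (c ^ γ) ^ max 0 (σ - 2 / γ) := by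
  have hc : 0 < c := hτ.trans_le hτc
  have hexp : γ * (σ - 2 / γ) = γ * σ - 2 := by field_simp
  rw [← Real.rpow_mul hc.le, mul_max_of_nonneg _ _ hγ.le, mul_zero, hexp, ← Real.rpow_two]
  rcases le_total (γ * σ) 2 with hle | hge
  · rw [min_eq_left hle, max_eq_left (sub_nonpos.2 hle), Real.rpow_zero, mul_one]
    calc τ ^ (2 : ℝ) * c ^ (γ * σ - 2) ≤ τ ^ (2 : ℝ) * τ ^ (γ * σ - 2) :=
          mul_le_mul_of_nonneg_left (Real.rpow_le_rpow_of_nonpos hτ hτc (sub_nonpos.2 hle))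
            (by positivity)
      _ = τ ^ (γ * σ) := by rw [← Real.rpow_add hτ]; ring_nf
  · rw [min_eq_right hge, max_eq_right (sub_nonneg.2 hge)]

noncomputable def lineInterp {X : Type*} [AddCommMonoid X] [Module ℝ X] (f : ℝ → X) (a b t : ℝ) :
    X :=
  ((b - t) / (b - a)) • f a + ((t - a) / (b - a)) • f b

lemma ConvexOn.le_lineInterp {g : ℝ → ℝ} {a b t : ℝ} (hg : ConvexOn ℝ (Icc a b) g) (hab : a < b)
    (ht : t ∈ Icc a b) : g t ≤ lineInterp g a b t := by
  have hba : 0 < b - a := sub_pos.2 hab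
  have hl : 0 ≤ (b - t) / (b - a) := div_nonneg (by linarith [ht.2]) hba.le
  have hr : 0 ≤ (t - a) / (b - a) := div_nonneg (by linarith [ht.1]) hba.le
  have hsum : (b - t) / (b - a) + (t - a) / (b - a) = 1 := by
    rw [← add_div, div_eq_one_iff_eq hba.ne']; ring
  have hpt : ((b - t) / (b - a)) • a + ((t - a) / (b - a)) • b = t := by
    simp only [smul_eq_mul]; field_simp; ring
  have := hg.2 (left_mem_Icc.2 hab.le) (right_mem_Icc.2 hab.le) hl hr hsum
  rwa [hpt] at this

section

variable {X : Type*} [NormedAddCommGroup X] [NormedSpace ℝ X] {f f' f'' : ℝ → X}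

theorem norm_sub_lineInterp_le_lineInterp_sub {g g' g'' : ℝ → ℝ} {a b t : ℝ} (hab : a < b)
    (ht : t ∈ Icc a b) (hf : ContinuousOn f (Icc a b))
    (hf' : ∀ s ∈ Ioo a b, HasDerivAt f (f' s) s) (hf'' : ∀ s ∈ Ioo a b, HasDerivAt f' (f'' s) s)
    (hg : ContinuousOn g (Icc a b)) (hg' : ∀ s ∈ Ioo a b, HasDerivAt g (g' s) s)
    (hg'' : ∀ s ∈ Ioo a b, HasDerivAt g' (g'' s) s)
    (hfg : ∀ s ∈ Ioo a b, ‖f'' s‖ ≤ g'' s) :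
    ‖f t - lineInterp f a b t‖ ≤ lineInterp g a b t - g t := by
  obtain ⟨ℓ, hℓ, hℓE⟩ := exists_dual_vector'' ℝ (f t - lineInterp f a b t)
  have hconv : ConvexOn ℝ (Icc a b) (fun s => g s + ℓ (f s)) := by
    refine convexOn_of_hasDerivWithinAt2_nonneg (f' := fun s => g' s + ℓ (f' s))
      (f'' := fun s => g'' s + ℓ (f'' s)) (convex_Icc a b)
      (hg.add (ℓ.continuous.comp_continuousOn hf))
      ?_ ?_ ?_ <;> rw [interior_Icc] <;> intro s hs
    · exact ((hg' s hs).add (ℓ.hasFDerivAt.comp_hasDerivAt s (hf' s hs))).hasDerivWithinAt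
    · exact ((hg'' s hs).add (ℓ.hasFDerivAt.comp_hasDerivAt s (hf'' s hs))).hasDerivWithinAt
    · have hℓf : ‖ℓ (f'' s)‖ ≤ ‖f'' s‖ := by simpa using ℓ.le_of_opNorm_le hℓ (f'' s)
      rw [Real.norm_eq_abs] at hℓf
      linarith [neg_le_of_abs_le (hℓf.trans (hfg s hs))]
  have hchord := hconv.le_lineInterp hab ht
  have hnorm : ‖f t - lineInterp f a b t‖ = ℓ (f t) - ℓ (lineInterp f a b t) := by
    rw [← map_sub, hℓE]; rfl
  rw [hnorm]
  simp only [lineInterp, map_add, map_smul, smul_eq_mul] at hchord ⊢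
  linarith

theorem norm_sub_lineInterp_le_of_norm_le {a b t M : ℝ} (hab : a < b) (ht : t ∈ Icc a b)
    (hf : ContinuousOn f (Icc a b)) (hf' : ∀ s ∈ Ioo a b, HasDerivAt f (f' s) s)
    (hf'' : ∀ s ∈ Ioo a b, HasDerivAt f' (f'' s) s) (hM : ∀ s ∈ Ioo a b, ‖f'' s‖ ≤ M) :
    ‖f t - lineInterp f a b t‖ ≤ M / 8 * (b - a) ^ 2 := by
  have hM0 : 0 ≤ M :=
    (norm_nonneg _).trans (hM _ ⟨left_lt_add_div_two.2 hab, add_div_two_lt_right.2 hab⟩)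
  refine (norm_sub_lineInterp_le_lineInterp_sub (g := fun s => M / 2 * s ^ 2) (g' := fun s => M * s)
    (g'' := fun _ => M) hab ht hf hf' hf'' (by fun_prop) (fun s _ => ?_)
    (fun s _ => ?_) hM).trans ?_
  · exact ((hasDerivAt_pow 2 s).const_mul (M / 2)).congr_deriv (by norm_num; ring)
  · simpa using (hasDerivAt_id s).const_mul M
  · have hba : b - a ≠ 0 := (sub_pos.2 hab).ne'
    have hchord : lineInterp (fun s => M / 2 * s ^ 2) a b t - M / 2 * t ^ 2
        = M / 2 * ((t - a) * (b - t)) := by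
      simp only [lineInterp, smul_eq_mul]; field_simp; ring
    rw [hchord]
    nlinarith [sq_nonneg (2 * t - a - b)]

theorem norm_sub_lineInterp_zero_le_of_norm_le_rpow {b t C σ p : ℝ} (hb : 0 < b)
    (ht : t ∈ Icc 0 b) (hf : ContinuousOn f (Icc 0 b))
    (hf' : ∀ s ∈ Ioo 0 b, HasDerivAt f (f' s) s) (hf'' : ∀ s ∈ Ioo 0 b, HasDerivAt f' (f'' s) s)
    (hC : 0 ≤ C) (hp0 : 0 < p) (hp1 : p < 1) (hpσ : p ≤ σ)
    (hbound : ∀ s ∈ Ioo 0 b, ‖f'' s‖ ≤ C * s ^ (σ - 2)) :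
    ‖f t - lineInterp f 0 b t‖ ≤ C / (p * (1 - p)) * b ^ σ := by
  set K := C * b ^ (σ - p) / (p * (1 - p)) with hK
  have hK0 : 0 ≤ K := by have : 0 < 1 - p := sub_pos.2 hp1; positivity
  have hKp : -K * (p * (p - 1)) = C * b ^ (σ - p) := by
    rw [hK]; field_simp [(sub_pos.2 hp1).ne']; ring
  refine (norm_sub_lineInterp_le_lineInterp_sub (g := fun s => -K * s ^ p)
    (g' := fun s => -K * (p * s ^ (p - 1)))
    (g'' := fun s => -K * (p * ((p - 1) * s ^ (p - 1 - 1)))) hb ht hf hf' hf''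
    ((Real.continuous_rpow_const hp0.le).continuousOn.const_smul (-K))
    (fun s hs => (Real.hasDerivAt_rpow_const (Or.inl hs.1.ne')).const_mul (-K))
    (fun s hs => ((Real.hasDerivAt_rpow_const (Or.inl hs.1.ne')).const_mul p).const_mul (-K))
    (fun s hs => ?_)).trans ?_
  · have hsplit : s ^ (σ - 2) = s ^ (σ - p) * s ^ (p - 2) := by
      rw [← Real.rpow_add hs.1]; ring_nf
    calc ‖f'' s‖ ≤ C * s ^ (σ - 2) := hbound s hs
      _ ≤ C * (b ^ (σ - p) * s ^ (p - 2)) := by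
        rw [hsplit]
        exact mul_le_mul_of_nonneg_left (mul_le_mul_of_nonneg_right
          (Real.rpow_le_rpow hs.1.le hs.2.le (sub_nonneg.2 hpσ)) (Real.rpow_nonneg hs.1.le _)) hC
      _ = -K * (p * ((p - 1) * s ^ (p - 1 - 1))) := by
        rw [show p - 1 - 1 = p - 2 by ring, ← mul_assoc, ← hKp]; ring
  · have htp : t ^ p ≤ b ^ p := Real.rpow_le_rpow ht.1 ht.2 hp0.le
    have hchord : lineInterp (fun s => -K * s ^ p) 0 b t - -K * t ^ p
        = K * t ^ p - t / b * (K * b ^ p) := by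
      simp only [lineInterp, smul_eq_mul, Real.zero_rpow hp0.ne']; field_simp [hb.ne']; ring
    have hKbp : K * b ^ p = C / (p * (1 - p)) * b ^ σ := by
      rw [hK, mul_div_right_comm, mul_assoc, ← Real.rpow_add hb]; ring_nf
    have hright : 0 ≤ t / b * (K * b ^ p) :=
      mul_nonneg (div_nonneg ht.1 hb.le) (mul_nonneg hK0 (Real.rpow_nonneg hb.le p))
    rw [hchord, ← hKbp]
    linarith [mul_le_mul_of_nonneg_left htp hK0]

theorem norm_sub_lineInterp_first_cell_le {τ γ σ C p t : ℝ} (hτ : 0 < τ) (hC : 0 ≤ C)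
    (hp0 : 0 < p) (hp1 : p < 1) (hpσ : p ≤ σ) (ht : t ∈ Icc 0 (τ ^ γ))
    (hf : ContinuousOn f (Ici 0)) (hf' : ∀ s, 0 < s → HasDerivAt f (f' s) s)
    (hf'' : ∀ s, 0 < s → HasDerivAt f' (f'' s) s)
    (hbound : ∀ s, 0 < s → ‖f'' s‖ ≤ C * s ^ (σ - 2)) :
    ‖f t - lineInterp f 0 (τ ^ γ) t‖ ≤ C / (p * (1 - p)) * (τ ^ 2 * τ ^ (γ * σ - 2)) := by
  have hpow : (τ ^ γ) ^ σ = τ ^ 2 * τ ^ (γ * σ - 2) := by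
    rw [← Real.rpow_mul hτ.le, ← Real.rpow_two, ← Real.rpow_add hτ]; ring_nf
  rw [← hpow]
  exact norm_sub_lineInterp_zero_le_of_norm_le_rpow (by positivity) ht
    (hf.mono Icc_subset_Ici_self) (fun s hs => hf' s hs.1) (fun s hs => hf'' s hs.1) hC hp0 hp1
    hpσ (fun s hs => hbound s hs.1)

theorem norm_sub_lineInterp_cell_le {τ d γ σ C t : ℝ} (hτ : 0 < τ) (hτd : τ ≤ d) (hγ : 1 ≤ γ)
    (hσ : 0 ≤ σ) (hC : 0 ≤ C) (ht : t ∈ Icc (d ^ γ) ((d + τ) ^ γ))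
    (hf : ContinuousOn f (Ici 0)) (hf' : ∀ s, 0 < s → HasDerivAt f (f' s) s)
    (hf'' : ∀ s, 0 < s → HasDerivAt f' (f'' s) s)
    (hbound : ∀ s, 0 < s → ‖f'' s‖ ≤ C * s ^ (σ - 2)) :
    ‖f t - lineInterp f (d ^ γ) ((d + τ) ^ γ) t‖
      ≤ C * γ ^ 2 * (2 ^ γ) ^ 2 / 8 * (τ ^ 2 * (d + τ) ^ (γ * σ - 2)) := by
  set c := d + τ with hc
  have hd : 0 < d := hτ.trans_le hτd
  have hγ0 : 0 < γ := one_pos.trans_le hγ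
  have hdγ : 0 < d ^ γ := Real.rpow_pos_of_pos hd γ
  have hcell : d ^ γ < c ^ γ := Real.rpow_lt_rpow hd.le (by linarith) hγ0
  have hratio : c ^ γ ≤ 2 ^ γ * d ^ γ := by
    rw [← Real.mul_rpow zero_le_two hd.le]
    exact Real.rpow_le_rpow (by linarith) (by linarith) hγ0.le
  have hM : ∀ s ∈ Ioo (d ^ γ) (c ^ γ), ‖f'' s‖ ≤ C * ((2 ^ γ) ^ 2 * (c ^ γ) ^ (σ - 2)) :=
    fun s hs => (hbound s (hdγ.trans hs.1)).trans (mul_le_mul_of_nonneg_left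
      (rpow_le_sq_mul_rpow hdγ (Ioo_subset_Icc_self hs) hratio
        (Real.one_le_rpow one_le_two hγ0.le) (by linarith)) hC)
  have hwidth : c ^ γ - d ^ γ ≤ γ * c ^ (γ - 1) * τ := by
    simpa [hc] using rpow_sub_rpow_le_mul hd.le (by linarith : d ≤ c) hγ
  have hexp : (c ^ γ) ^ (σ - 2) * (c ^ (γ - 1)) ^ 2 = c ^ (γ * σ - 2) := by
    rw [← Real.rpow_mul (by linarith), ← Real.rpow_two, ← Real.rpow_mul (by linarith),
      ← Real.rpow_add (by linarith)]
    ring_nf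
  calc ‖f t - lineInterp f (d ^ γ) (c ^ γ) t‖
      ≤ C * ((2 ^ γ) ^ 2 * (c ^ γ) ^ (σ - 2)) / 8 * (c ^ γ - d ^ γ) ^ 2 :=
        norm_sub_lineInterp_le_of_norm_le hcell ht (hf.mono fun s hs => hdγ.le.trans hs.1)
          (fun s hs => hf' s (hdγ.trans hs.1)) (fun s hs => hf'' s (hdγ.trans hs.1)) hM
    _ ≤ C * ((2 ^ γ) ^ 2 * (c ^ γ) ^ (σ - 2)) / 8 * (γ * c ^ (γ - 1) * τ) ^ 2 := by
        gcongr
    _ = C * γ ^ 2 * (2 ^ γ) ^ 2 / 8 * (τ ^ 2 * c ^ (γ * σ - 2)) := by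
        rw [← hexp]; ring

end

theorem graded_mesh_interp_error_general {X : Type*} [NormedAddCommGroup X]
    [NormedSpace ℝ X]
    (γ σ C : ℝ) (hγ : 1 ≤ γ) (hσ : 0 < σ) (hC : 0 < C)
    (u u' u'' : ℝ → X)
    (hu0 : ContinuousOn u (Ici 0)
    )
    (hu : ∀ t, 0 < t → HasDerivAt u (u' t) t)
    (hu' : ∀ t, 0 < t → HasDerivAt u' (u'' t) t)
    (hbound : ∀ t, 0 < t → ‖u'' t‖ ≤ C * t ^ (σ - 2)) :
    ∃ C' > 0, ∀ τ : ℝ, 0 < τ → ∀ n : ℕ, 1 ≤ n →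
      ∀ t ∈ Icc ((((n - 1 : ℕ) : ℝ) * τ) ^ γ) (((n : ℝ) * τ) ^ γ),
        ‖u t - (((((n : ℝ) * τ) ^ γ - t) / (((n : ℝ) * τ) ^ γ - (((n - 1 : ℕ) : ℝ) * τ) ^ γ))
              • u ((((n - 1 : ℕ) : ℝ) * τ) ^ γ)
            + ((t - (((n - 1 : ℕ) : ℝ) * τ) ^ γ) / (((n : ℝ) * τ) ^ γ - (((n - 1 : ℕ) : ℝ) * τ) ^ γ))
              • u (((n : ℝ) * τ) ^ γ))‖
          ≤ C' * τ ^ (min (γ * σ) 2) * ((((n : ℝ) * τ) ^ γ) ^ (max 0 (σ - 2 / γ))) := by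
  have hγ0 : 0 < γ := one_pos.trans_le hγ
  obtain ⟨p, hp0, hp1, hpσ⟩ : ∃ p : ℝ, 0 < p ∧ p < 1 ∧ p ≤ σ :=
    ⟨min σ 1 / 2, by positivity, by linarith [min_le_right σ 1], by linarith [min_le_left σ 1]⟩
  have hK0 : 0 < 1 / (p * (1 - p)) := by have := sub_pos.2 hp1; positivity
  refine ⟨C * (1 / (p * (1 - p)) + γ ^ 2 * (2 ^ γ) ^ 2 / 8), by positivity, ?_⟩
  intro τ hτ n hn t ht
  have hτc : τ ≤ n * τ := le_mul_of_one_le_left hτ.le (by exact_mod_cast hn)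
  rw [mul_assoc]
  refine le_trans ?_ (mul_le_mul_of_nonneg_left
    (sq_mul_rpow_le_rpow_min_mul_rpow_max hτ hτc hγ0) (by positivity))
  change ‖u t - lineInterp u _ _ t‖ ≤ _
  rcases hn.eq_or_lt with rfl | hn2
  · simp only [Nat.sub_self, Nat.cast_zero, zero_mul, Real.zero_rpow hγ0.ne', Nat.cast_one,
      one_mul] at ht ⊢
    refine (norm_sub_lineInterp_first_cell_le hτ hC.le hp0 hp1 hpσ ht hu0 hu hu' hbound).trans ?_
    gcongr
    rw [mul_add, mul_one_div]
    exact le_add_of_nonneg_right (by positivity)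
  · have hτd : τ ≤ ((n - 1 : ℕ) : ℝ) * τ :=
      le_mul_of_one_le_left hτ.le (by exact_mod_cast (by omega : 1 ≤ n - 1))
    have hc : (n : ℝ) * τ = ((n - 1 : ℕ) : ℝ) * τ + τ := by
      rw [Nat.cast_sub hn]; push_cast; ring
    rw [hc] at ht ⊢
    refine (norm_sub_lineInterp_cell_le hτ hτd hγ hσ.le hC.le ht hu0 hu hu' hbound).trans ?_
    gcongr
    linarith [mul_pos hC hK0]

/-- On the graded mesh `t_n = (nτ)^γ`, if `‖u''(t)‖ ≤ C t^{σ-2}` for `t > 0`, then the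
piecewise-linear interpolation error satisfies
`‖u - u_I‖_{L^∞(I_n)} ≤ C' τ^{min(γσ,2)} t_n^{max(0, σ - 2/γ)}` with `C'` independent
of `n` and `τ`. -/
theorem graded_mesh_interp_error {X : Type*} [NormedAddCommGroup X]
    [NormedSpace ℝ X] [CompleteSpace X]
    (γ σ C : ℝ) (hγ : 1 ≤ γ) (hσ : 0 < σ) (hC : 0 < C)
    (u u' u'' : ℝ → X)
    (hu0 : ContinuousOn u (Ici 0)
    )
    (hu : ∀ t, 0 < t → HasDerivAt u (u' t) t)
    (hu' : ∀ t, 0 < t → HasDerivAt u' (u'' t) t)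
    (hbound : ∀ t, 0 < t → ‖u'' t‖ ≤ C * t ^ (σ - 2)) :
    ∃ C' > 0, ∀ τ : ℝ, 0 < τ → ∀ n : ℕ, 1 ≤ n →
      ∀ t ∈ Icc ((((n - 1 : ℕ) : ℝ) * τ) ^ γ) (((n : ℝ) * τ) ^ γ),
        ‖u t - (((((n : ℝ) * τ) ^ γ - t) / (((n : ℝ) * τ) ^ γ - (((n - 1 : ℕ) : ℝ) * τ) ^ γ))
              • u ((((n - 1 : ℕ) : ℝ) * τ) ^ γ)
            + ((t - (((n - 1 : ℕ) : ℝ) * τ) ^ γ) / (((n : ℝ) * τ) ^ γ - (((n - 1 : ℕ) : ℝ) * τ) ^ γ))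
              • u (((n : ℝ) * τ) ^ γ))‖
          ≤ C' * τ ^ (min (γ * σ) 2) * ((((n : ℝ) * τ) ^ γ) ^ (max 0 (σ - 2 / γ))) :=
  graded_mesh_interp_error_general γ σ C hγ hσ hC u u' u'' hu0 hu hu' hbound
end

section
/- For the graded mesh t_n = (nτ)^γ with γ ≥ 1 and the weight estimates τ_j ≤ γ τ t_j^{1−1/γ} (j ≥ 2), if σ, α satisfy γ(2σ − α) > 3 − α and δ = σ − 2/γ, then τ^{1+α} Σ_{j=2}^N t_j^{2δ} τ_j^{−α} ≤ C for a constant C independent of τ and N, where Nτ = T^{1/γ}. -/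
/-!
Write `τ_j = t_j - t_{j-1} = τ^γ (j^γ - (j-1)^γ)`. For `γ ≥ 1` and `j ≥ 2` one has
`j^γ - (j-1)^γ ≥ (j-1)^(γ-1) ≥ (j/2)^(γ-1)`, so each summand is at most a constant times
`τ^(γ(2σ-α)-4) j^(β-1)` with `β = γ(2σ-α)+α-3 > 0`. The prefactor turns the power of `τ` into `τ^β`,
and `∑_{j ≤ N} j^(β-1) = O(N^β)` (directly for `β ≥ 1`, by telescoping against `j^β - (j-1)^β`
for `β < 1`), so the whole expression is `O((τN)^β) = O(T^(β/γ))`.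
-/

open Finset

lemma sub_one_rpow_sub_one_le_rpow_sub_rpow {p x : ℝ} (hp : 1 ≤ p) (hx : 1 ≤ x) :
    (x - 1) ^ (p - 1) ≤ x ^ p - (x - 1) ^ p := by
  have hmono : (x - 1) ^ (p - 1) ≤ x ^ (p - 1) :=
    Real.rpow_le_rpow (by linarith) (by linarith) (by linarith)
  -- `x^p - (x-1)^p = x · x^(p-1) - (x-1) · (x-1)^(p-1)` and `x^(p-1) ≥ (x-1)^(p-1)`
  have hsplit : ∀ y : ℝ, 0 ≤ y → y ^ p = y ^ (p - 1) * y := fun y hy => by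
    simpa using Real.rpow_add' hy (y := p - 1) (z := 1) (by simp; linarith)
  rw [hsplit x (by linarith), hsplit (x - 1) (by linarith)]
  nlinarith

lemma mul_rpow_sub_one_le_rpow_sub_rpow {p x : ℝ} (hp₀ : 0 ≤ p) (hp₁ : p ≤ 1) (hx : 1 ≤ x) :
    p * x ^ (p - 1) ≤ x ^ p - (x - 1) ^ p := by
  have hx₀ : 0 < x := by linarith
  have hbern := rpow_one_add_le_one_add_mul_self (s := -x⁻¹)
    (by simpa using inv_le_one_of_one_le₀ hx) hp₀ hp₁
  have hscale : x ^ p * (1 + -x⁻¹) ^ p = (x - 1) ^ p := by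
    rw [← Real.mul_rpow hx₀.le (by simpa using inv_le_one_of_one_le₀ hx)]
    congr 1; field_simp; ring
  have hexpand : x ^ p * (1 + p * -x⁻¹) = x ^ p - p * x ^ (p - 1) := by
    rw [Real.rpow_sub_one hx₀.ne']; field_simp; ring
  nlinarith [mul_le_mul_of_nonneg_left hbern (Real.rpow_nonneg hx₀.le p)]

lemma sum_Icc_rpow_sub_one_le {p : ℝ} (hp : 0 < p) (N : ℕ) :
    ∑ j ∈ Icc 1 N, (j : ℝ) ^ (p - 1) ≤ max 1 p⁻¹ * (N : ℝ) ^ p := by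
  rcases le_total 1 p with hp₁ | hp₁
  · calc ∑ j ∈ Icc 1 N, (j : ℝ) ^ (p - 1) ≤ ∑ _j ∈ Icc 1 N, (N : ℝ) ^ (p - 1) :=
          sum_le_sum fun j hj => Real.rpow_le_rpow (by positivity)
            (by exact_mod_cast (mem_Icc.mp hj).2) (by linarith)
      _ = (N : ℝ) ^ p := by
          rcases N.eq_zero_or_pos with rfl | hN
          · simp [hp.ne']
          · rw [sum_const, Nat.card_Icc, nsmul_eq_mul, Real.rpow_sub_one (by positivity)]
            push_cast; field_simp
      _ ≤ max 1 p⁻¹ * (N : ℝ) ^ p := le_mul_of_one_le_left (by positivity) (le_max_left _ _)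
  · suffices ∑ j ∈ Icc 1 N, (j : ℝ) ^ (p - 1) ≤ p⁻¹ * (N : ℝ) ^ p from
      this.trans (mul_le_mul_of_nonneg_right (le_max_right _ _) (by positivity))
    induction N with
    | zero => simp [hp.ne']
    | succ n ih =>
      have hstep := mul_rpow_sub_one_le_rpow_sub_rpow hp.le hp₁ (x := (n : ℝ) + 1) (by simp)
      rw [add_sub_cancel_right, ← le_inv_mul_iff₀ hp] at hstep
      rw [sum_Icc_succ_top (by omega)]
      push_cast
      calc ∑ j ∈ Icc 1 n, (j : ℝ) ^ (p - 1) + ((n : ℝ) + 1) ^ (p - 1)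
          ≤ p⁻¹ * (n : ℝ) ^ p + p⁻¹ * (((n : ℝ) + 1) ^ p - (n : ℝ) ^ p) := add_le_add ih hstep
        _ = p⁻¹ * ((n : ℝ) + 1) ^ p := by ring

lemma graded_mesh_term_le {τ γ σ α x : ℝ} (hτ : 0 < τ) (hγ : 1 ≤ γ) (hα : 0 ≤ α) (hx : 2 ≤ x) :
    ((x * τ) ^ γ) ^ (2 * (σ - 2 / γ)) * ((x * τ) ^ γ - ((x - 1) * τ) ^ γ) ^ (-α) ≤
      2 ^ (α * (γ - 1)) * τ ^ (γ * (2 * σ - α) - 4) * x ^ (γ * (2 * σ - α) + α - 4) := by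
  have hstep : τ ^ γ * (x / 2) ^ (γ - 1) ≤ (x * τ) ^ γ - ((x - 1) * τ) ^ γ := by
    rw [Real.mul_rpow (by linarith) hτ.le, Real.mul_rpow (by linarith) hτ.le]
    have := (Real.rpow_le_rpow (by linarith) (by linarith : x / 2 ≤ x - 1) (by linarith)).trans
      (sub_one_rpow_sub_one_le_rpow_sub_rpow hγ (by linarith : 1 ≤ x))
    nlinarith [Real.rpow_pos_of_pos hτ γ]
  have hx₀ : 0 < x := by linarith
  have hγ₀ : γ ≠ 0 := by positivity
  calc ((x * τ) ^ γ) ^ (2 * (σ - 2 / γ)) * ((x * τ) ^ γ - ((x - 1) * τ) ^ γ) ^ (-α)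
      ≤ ((x * τ) ^ γ) ^ (2 * (σ - 2 / γ)) * (τ ^ γ * (x / 2) ^ (γ - 1)) ^ (-α) := by
        have := Real.rpow_le_rpow_of_nonpos (by positivity) hstep (neg_nonpos.mpr hα)
        exact mul_le_mul_of_nonneg_left this (by positivity)
    _ = 2 ^ (α * (γ - 1)) * τ ^ (γ * (2 * σ - α) - 4) * x ^ (γ * (2 * σ - α) + α - 4) := by
        -- all bases are positive, so compare exponents of `exp`
        simp (disch := positivity) only [Real.rpow_def_of_pos, Real.log_exp, Real.log_mul,
          Real.log_div, ← Real.exp_add]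
        congr 1
        field_simp
        ring

theorem graded_mesh_weighted_sum_bound_general (T γ σ α : ℝ) (hT : 0 < T) (hγ : 1 ≤ γ)
    (hα : 0 < α) (hcond : γ * (2 * σ - α) > 3 - α) :
    ∃ C > 0, ∀ N : ℕ, 2 ≤ N →
      (T ^ (1 / γ) / N) ^ (1 + α) *
        ∑ j ∈ Finset.Icc 2 N,
          (((j : ℝ) * (T ^ (1 / γ) / N)) ^ γ) ^ (2 * (σ - 2 / γ)) *
            ((((j : ℝ) * (T ^ (1 / γ) / N)) ^ γ
              - (((j : ℝ) - 1) * (T ^ (1 / γ) / N)) ^ γ) ^ (-α))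
        ≤ C := by
  set β := γ * (2 * σ - α) + α - 3 with hβ_def
  have hβ : 0 < β := by linarith
  refine ⟨2 ^ (α * (γ - 1)) * max 1 β⁻¹ * T ^ (β / γ), by positivity, fun N hN => ?_⟩
  set τ := T ^ (1 / γ) / N
  have hτ : 0 < τ := by
    have : (0 : ℝ) < N := by exact_mod_cast (by omega : 0 < N)
    positivity
  have hτN : τ * N = T ^ (1 / γ) := div_mul_cancel₀ _ (by exact_mod_cast (by omega : N ≠ 0))
  calc τ ^ (1 + α) * ∑ j ∈ Icc 2 N, ((j * τ) ^ γ) ^ (2 * (σ - 2 / γ)) *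
          ((j * τ) ^ γ - ((j - 1) * τ) ^ γ) ^ (-α)
      ≤ τ ^ (1 + α) * ∑ j ∈ Icc 2 N,
          2 ^ (α * (γ - 1)) * τ ^ (γ * (2 * σ - α) - 4) * (j : ℝ) ^ (β - 1) := by
        refine mul_le_mul_of_nonneg_left (sum_le_sum fun j hj => ?_) (by positivity)
        refine (graded_mesh_term_le hτ hγ hα.le (x := j)
          (by exact_mod_cast (mem_Icc.mp hj).1)).trans_eq ?_
        rw [hβ_def]; ring_nf
    _ = 2 ^ (α * (γ - 1)) * τ ^ β * ∑ j ∈ Icc 2 N, (j : ℝ) ^ (β - 1) := by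
        have hτβ : τ ^ (1 + α) * τ ^ (γ * (2 * σ - α) - 4) = τ ^ β := by
          rw [← Real.rpow_add hτ, hβ_def]; ring_nf
        rw [← mul_sum, ← hτβ]
        ring
    _ ≤ 2 ^ (α * (γ - 1)) * τ ^ β * (max 1 β⁻¹ * (N : ℝ) ^ β) := by
        gcongr
        exact (sum_le_sum_of_subset_of_nonneg (Icc_subset_Icc_left one_le_two)
          fun j _ _ => by positivity).trans (sum_Icc_rpow_sub_one_le hβ N)
    _ = 2 ^ (α * (γ - 1)) * max 1 β⁻¹ * T ^ (β / γ) := by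
        rw [mul_comm (max _ _), ← mul_assoc, mul_assoc _ (τ ^ β), ← Real.mul_rpow hτ.le
          (by positivity), hτN, ← Real.rpow_mul hT.le, one_div_mul_eq_div]
        ring

/-- On the graded mesh `t_j = (jτ)^γ` with `τ = T^{1/γ}/N`, if `γ(2σ-α) > 3-α` and
`δ = σ - 2/γ`, then `τ^{1+α} Σ_{j=2}^N t_j^{2δ} τ_j^{-α} ≤ C` with `C` independent of
`τ` and `N`. -/
theorem graded_mesh_weighted_sum_bound (T γ σ α : ℝ) (hT : 0 < T) (hγ : 1 ≤ γ)
    (hα : 0 < α) (hα1 : α < 1) (hcond : γ * (2 * σ - α) > 3 - α) :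
    ∃ C > 0, ∀ N : ℕ, 2 ≤ N →
      (T ^ (1 / γ) / N) ^ (1 + α) *
        ∑ j ∈ Finset.Icc 2 N,
          (((j : ℝ) * (T ^ (1 / γ) / N)) ^ γ) ^ (2 * (σ - 2 / γ)) *
            ((((j : ℝ) * (T ^ (1 / γ) / N)) ^ γ
              - (((j : ℝ) - 1) * (T ^ (1 / γ) / N)) ^ γ) ^ (-α))
        ≤ C :=
  graded_mesh_weighted_sum_bound_general T γ σ α hT hγ hα hcond
end
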